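/- Strong duality relation for the Kiefer–Wolfowitz problem at optimality: if f* ∈ S minimizes -Σᵢ log((Af)ᵢ) over the simplex S with g* = Af* > 0, then ν* defined by νᵢ* = 1/gᵢ* satisfies Aᵀν* ≤ n·1_m, with equality in coordinate j whenever f_j* > 0. -/

import Mathlib

open Matrix Filter Topology

lemma KW_aux_le (n : ℕ) (c : Fin n → ℝ)
    (h : ∀ᶠ t in 𝓝[>] (0:ℝ), ∑ i, Real.log (1 + t * c i) ≤ 0) : ∑ i, c i ≤ 0 := by
  have hd : HasDerivAt (fun t : ℝ => ∑ i, Real.log (1 + t * c i)) (∑ i, c i) 0 := by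
    have H : ∀ i ∈ Finset.univ, HasDerivAt (fun t : ℝ => Real.log (1 + t * c i)) (c i) 0 := by
      intro i _
      have h1 : HasDerivAt (fun t : ℝ => 1 + t * c i) (c i) 0 := by
        simpa using ((hasDerivAt_id (0:ℝ)).mul_const (c i)).const_add 1
      have := (Real.hasDerivAt_log (by norm_num : (1:ℝ) + 0 * c i ≠ 0)).comp 0 h1
      simpa using h1.log (by norm_num)
    simpa using HasDerivAt.fun_sum H
  have hs := hasDerivAt_iff_tendsto_slope.mp hd
  have hs' : Tendsto (slope (fun t : ℝ => ∑ i, Real.log (1 + t * c i)) 0) (𝓝[>] 0)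
      (𝓝 (∑ i, c i)) := hs.mono_left (nhdsWithin_mono _ (fun x hx => ne_of_gt hx))
  refine le_of_tendsto hs' ?_
  filter_upwards [h, self_mem_nhdsWithin] with t ht ht0
  have : slope (fun t : ℝ => ∑ i, Real.log (1 + t * c i)) 0 t
      = (∑ i, Real.log (1 + t * c i)) / t := by
    simp [slope_def_field]
  rw [this]
  exact div_nonpos_of_nonpos_of_nonneg ht (le_of_lt ht0)

/-- KKT conditions for the Kiefer–Wolfowitz problem: if `f*` minimizes
`F(f) = -Σᵢ log((Af)ᵢ)` over the unit simplex, with `g* = Af* > 0`, then the dual vector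
`ν*` given by `νᵢ* = 1/gᵢ*` satisfies `Aᵀν* ≤ n·1`, with equality in every coordinate `j`
with `f*_j > 0`. -/
theorem KW_duality_KKT
    (n m : ℕ) (A : Matrix (Fin n) (Fin m) ℝ) (hA : ∀ i j, 0 < A i j)
    (fstar : Fin m → ℝ) (hf : fstar ∈ stdSimplex ℝ (Fin m))
    (hg : ∀ i, 0 < A.mulVec fstar i)
    (hmin : ∀ f ∈ stdSimplex ℝ (Fin m), (∀ i, 0 < A.mulVec f i) →
      -∑ i, Real.log (A.mulVec fstar i) ≤ -∑ i, Real.log (A.mulVec f i)) :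
    ∀ j, (∑ i, A i j * (1 / A.mulVec fstar i)) ≤ (n : ℝ) ∧
      (0 < fstar j → ∑ i, A i j * (1 / A.mulVec fstar i) = (n : ℝ)) := by
  intro j
  set g : Fin n → ℝ := A.mulVec fstar with hgdef
  set c : Fin n → ℝ := fun i => A i j / g i - 1 with hcdef
  obtain ⟨hf0, hf1⟩ := hf
  -- key sum rewriting
  have hsum : ∑ i, A i j * (1 / g i) = ∑ i, c i + n := by
    calc ∑ i, A i j * (1 / g i) = ∑ i, (c i + 1) := by
          refine Finset.sum_congr rfl fun i _ => ?_
          rw [hcdef]; ring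
      _ = ∑ i, c i + n := by simp [Finset.sum_add_distrib]
  -- `hmin` rephrased
  have hmin' : ∀ f ∈ stdSimplex ℝ (Fin m), (∀ i, 0 < A.mulVec f i) →
      ∑ i, Real.log (A.mulVec f i) ≤ ∑ i, Real.log (g i) := by
    intro f hfs hfp
    have := hmin f hfs hfp
    linarith
  -- Part 1 : ∑ c ≤ 0
  have hle : ∑ i, c i ≤ 0 := by
    apply KW_aux_le
    filter_upwards [Ioo_mem_nhdsGT_of_mem (by norm_num : (0:ℝ) ∈ Set.Ico 0 1)] with t ht
    obtain ⟨ht0, ht1⟩ := ht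
    set f : Fin m → ℝ := fun k => (1 - t) * fstar k + t * (Pi.single j 1 : Fin m → ℝ) k with hfdef
    have hfs : f ∈ stdSimplex ℝ (Fin m) := by
      constructor
      · intro k
        have h1 : (0:ℝ) ≤ (Pi.single j 1 : Fin m → ℝ) k := by
          rcases eq_or_ne k j with rfl | h
          · simp
          · simp [Pi.single_apply, h]
        have h2 := mul_nonneg (by linarith : (0:ℝ) ≤ 1 - t) (hf0 k)
        have h3 := mul_nonneg ht0.le h1
        simp only [hfdef]
        linarith
      · simp only [hfdef, Finset.sum_add_distrib, ← Finset.mul_sum, hf1]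
        have hone : ∑ k, (Pi.single j 1 : Fin m → ℝ) k = 1 := by
          simp [Pi.single_apply, Finset.sum_ite_eq']
        rw [hone]; ring
    have hAf : ∀ i, A.mulVec f i = (1 - t) * g i + t * A i j := by
      intro i
      have e1 : A.mulVec f i = ∑ k, ((1 - t) * (A i k * fstar k)
          + t * (A i k * (Pi.single j 1 : Fin m → ℝ) k)) := by
        simp only [mulVec, dotProduct, hfdef]
        exact Finset.sum_congr rfl fun k _ => by ring
      have e2 : ∑ k, A i k * (Pi.single j 1 : Fin m → ℝ) k = A i j := by
        simp [Pi.single_apply, Finset.sum_ite_eq']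
      rw [e1, Finset.sum_add_distrib, ← Finset.mul_sum, ← Finset.mul_sum, e2]
      rfl
    have hAfpos : ∀ i, 0 < A.mulVec f i := by
      intro i
      rw [hAf i]
      have := hg i
      have := hA i j
      nlinarith
    have key := hmin' f hfs hAfpos
    have hlog : ∀ i, Real.log (A.mulVec f i) = Real.log (g i) + Real.log (1 + t * c i) := by
      intro i
      have hgi := hg i
      have h1 : (0:ℝ) < 1 + t * c i := by
        have : 1 + t * c i = ((1 - t) * g i + t * A i j) / g i := by
          simp only [hcdef]
          field_simp
          ring
        rw [this]
        exact div_pos (by have := hA i j; nlinarith) hgi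
      have : A.mulVec f i = g i * (1 + t * c i) := by
        rw [hAf i]
        simp only [hcdef]
        field_simp
        ring
      rw [this, Real.log_mul (ne_of_gt hgi) (ne_of_gt h1)]
    calc ∑ i, Real.log (1 + t * c i)
        = ∑ i, Real.log (A.mulVec f i) - ∑ i, Real.log (g i) := by
          simp [hlog, Finset.sum_add_distrib]
      _ ≤ 0 := by linarith
  refine ⟨by rw [hsum]; linarith, ?_⟩
  -- Part 2 : equality when fstar j > 0
  intro hfj
  have hge : (0:ℝ) ≤ ∑ i, c i := by
    have := KW_aux_le n (fun i => -c i) ?_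
    · simp [Finset.sum_neg_distrib] at this
      linarith [this]
    filter_upwards [Ioo_mem_nhdsGT_of_mem (by exact ⟨le_refl 0, hfj⟩ : (0:ℝ) ∈ Set.Ico 0 (fstar j)),
      (Filter.eventually_all).2 (fun i => Ioo_mem_nhdsGT_of_mem
        (⟨le_refl 0, div_pos (hg i) (hA i j)⟩ : (0:ℝ) ∈ Set.Ico 0 (g i / A i j)))] with t ht htA
    obtain ⟨ht0, htj⟩ := ht
    have htA' : ∀ i, t * A i j < g i := by
      intro i
      have h := (htA i).2
      rw [lt_div_iff₀ (hA i j)] at h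
      linarith
    set f : Fin m → ℝ := fun k => (1 + t) * fstar k - t * (Pi.single j 1 : Fin m → ℝ) k with hfdef
    have hfj1 : fstar j ≤ 1 := by
      rw [← hf1]
      exact Finset.single_le_sum (fun k _ => hf0 k) (Finset.mem_univ j)
    have hfs : f ∈ stdSimplex ℝ (Fin m) := by
      constructor
      · intro k
        rcases eq_or_ne k j with rfl | h
        · simp only [hfdef, Pi.single_eq_same, mul_one]
          nlinarith [hf0 k]
        · have h1 : (Pi.single j 1 : Fin m → ℝ) k = 0 := Pi.single_eq_of_ne h 1
          simp only [hfdef, h1, mul_zero, sub_zero]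
          nlinarith [hf0 k]
      · simp only [hfdef, Finset.sum_sub_distrib, ← Finset.mul_sum, hf1]
        have hone : ∑ k, (Pi.single j 1 : Fin m → ℝ) k = 1 := by
          simp [Pi.single_apply, Finset.sum_ite_eq']
        rw [hone]; ring
    have hAf : ∀ i, A.mulVec f i = (1 + t) * g i - t * A i j := by
      intro i
      have e1 : A.mulVec f i = ∑ k, ((1 + t) * (A i k * fstar k)
          - t * (A i k * (Pi.single j 1 : Fin m → ℝ) k)) := by
        simp only [mulVec, dotProduct, hfdef]
        exact Finset.sum_congr rfl fun k _ => by ring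
      have e2 : ∑ k, A i k * (Pi.single j 1 : Fin m → ℝ) k = A i j := by
        simp [Pi.single_apply, Finset.sum_ite_eq']
      rw [e1, Finset.sum_sub_distrib, ← Finset.mul_sum, ← Finset.mul_sum, e2]
      rfl
    have hAfpos : ∀ i, 0 < A.mulVec f i := by
      intro i
      rw [hAf i]
      have := htA' i
      have := hg i
      nlinarith
    have key := hmin' f hfs hAfpos
    have hlog : ∀ i, Real.log (A.mulVec f i) = Real.log (g i) + Real.log (1 + t * -c i) := by
      intro i
      have hgi := hg i
      have h1 : (0:ℝ) < 1 + t * -c i := by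
        have : 1 + t * -c i = ((1 + t) * g i - t * A i j) / g i := by
          simp only [hcdef]
          field_simp
          ring
        rw [this]
        exact div_pos (by have := htA' i; nlinarith) hgi
      have : A.mulVec f i = g i * (1 + t * -c i) := by
        rw [hAf i]
        simp only [hcdef]
        field_simp
        ring
      rw [this, Real.log_mul (ne_of_gt hgi) (ne_of_gt h1)]
    calc ∑ i, Real.log (1 + t * -c i)
        = ∑ i, Real.log (A.mulVec f i) - ∑ i, Real.log (g i) := by
          simp [hlog, Finset.sum_add_distrib]
      _ ≤ 0 := by linarith
  rw [hsum]
  linarith
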